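/- arXiv:2409.11327 — 3 statements merged into one kernel-verified Lean document; each statement's English description precedes it below -/
import Mathlib

section
/- Let (Ω, ℱ, ℙ) be a probability space and let B : [0,∞) × Ω → ℝ be a standard one-dimensional Brownian motion: B₀ = 0 almost surely, B has almost surely continuous sample paths, and for all 0 ≤ u < t the increment B_t − B_u is independent of σ(B_r : r ≤ u) and has the Gaussian distribution N(0, t−u). Then for every η > 1, every s > 1, and every δ ∈ (0,1): ℙ( ∃ t ∈ (0,∞) such that B_t ≥ ((η^{1/4} + η^{−1/4})/√2) · √( (1 ∨ t) · ( s·log log(η·(1 ∨ t)) + log( ζ(s)/(δ·(log η)^s) ) ) ) ) ≤ δ, where ζ(s) = ∑_{k=1}^∞ k^{−s} is the Riemann zeta function and 1 ∨ t = max(1, t). -/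
open MeasureTheory ProbabilityTheory Filter

/-- The Riemann zeta function at a real argument, `ζ(s) = ∑_{k=1}^∞ k^{−s}`. -/
noncomputable def zetaReal (s : ℝ) : ℝ := ∑' k : ℕ, ((k : ℝ) + 1) ^ (-s)

/-!
For every `θ ≥ 0`, `exp (θ B_t - θ² t / 2)` is a martingale of mean one, so (Ville's inequality)
the probability that `B` ever reaches the line `θ t / 2 + x` is at most `exp (-θ x)`. On a finite
set of times this follows by splitting at the first crossing; path continuity then passes to all
times through the rationals.

Cut `[1, ∞)` into the blocks `[η ^ k, η ^ (k + 1)]`. On the `k`-th block the boundary dominates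
the chord of `τ ↦ C √(τ g_k)`, a line whose slope `θ_k` and intercept `x_k` satisfy
`θ_k x_k = g_k`, and the levels `g_k` are chosen so that `exp (-g_k) = δ (k + 1) ^ (-s) / ζ(s)`.
A union bound over the blocks sums to `δ`.
-/

open Real
open scoped NNReal Topology

section GaussianExpMoment

variable {Ω : Type*} [MeasurableSpace Ω] {μ : Measure Ω} {Y : Ω → ℝ} {v : ℝ≥0}

lemma integrable_exp_mul_sub_of_map_eq_gaussianReal [NeZero μ]
    (hY : μ.map Y = gaussianReal 0 v) (c d : ℝ) : Integrable (fun ω => exp (c * Y ω - d)) μ := by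
  have hint : Integrable (fun ω => exp (c * Y ω)) μ :=
    mgf_pos_iff.mp (by rw [mgf_gaussianReal hY]; positivity)
  simpa only [sub_eq_add_neg, exp_add] using hint.mul_const (exp (-d))

lemma integral_exp_mul_sub_of_map_eq_gaussianReal (hY : μ.map Y = gaussianReal 0 v) (c : ℝ) :
    ∫ ω, exp (c * Y ω - c ^ 2 * v / 2) ∂μ = 1 := by
  simp only [sub_eq_add_neg, exp_add]
  rw [integral_mul_const, ← mgf, mgf_gaussianReal hY, ← exp_add]
  ring_nf
  exact exp_zero

end GaussianExpMoment

section BrownianIncrements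

variable {Ω : Type*} {mΩ : MeasurableSpace Ω} {μ : Measure Ω} {B : ℝ → Ω → ℝ}

abbrev pastMeasurableSpace (B : ℝ → Ω → ℝ) (u : ℝ) : MeasurableSpace Ω :=
  ⨆ r : {r : ℝ // 0 ≤ r ∧ r ≤ u}, MeasurableSpace.comap (B r) inferInstance

lemma pastMeasurableSpace_mono (B : ℝ → Ω → ℝ) : Monotone (pastMeasurableSpace B) :=
  fun _ _ huv => iSup_le fun r => le_iSup_of_le ⟨r, r.2.1, r.2.2.trans huv⟩ le_rfl

lemma measurable_pastMeasurableSpace {r u : ℝ} (hr : 0 ≤ r) (hru : r ≤ u) :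
    Measurable[pastMeasurableSpace B u] (B r) :=
  Measurable.of_comap_le (le_iSup_of_le ⟨r, hr, hru⟩ le_rfl)

/-- A Brownian motion without the continuity of its paths. -/
structure HasBrownianIncrements (B : ℝ → Ω → ℝ) (μ : Measure Ω) : Prop where
  measurable : ∀ t, Measurable (B t)
  ae_eq_zero : ∀ᵐ ω ∂μ, B 0 ω = 0
  map_sub : ∀ u t : ℝ, 0 ≤ u → u < t →
    μ.map (fun ω => B t ω - B u ω) = gaussianReal 0 (t - u).toNNReal
  indep_sub : ∀ u t : ℝ, 0 ≤ u → u < t →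
    Indep (MeasurableSpace.comap (fun ω => B t ω - B u ω) inferInstance)
      (pastMeasurableSpace B u) μ

noncomputable def expProcess (B : ℝ → Ω → ℝ) (θ t : ℝ) (ω : Ω) : ℝ :=
  exp (θ * B t ω - θ ^ 2 * t / 2)

lemma expProcess_eq_mul (θ u t : ℝ) (ω : Ω) :
    expProcess B θ t ω =
      expProcess B θ u ω * exp (θ * (B t ω - B u ω) - θ ^ 2 * (t - u) / 2) := by
  rw [expProcess, expProcess, ← exp_add]
  ring_nf

namespace HasBrownianIncrements

lemma pastMeasurableSpace_le (hB : HasBrownianIncrements B μ) (u : ℝ) :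
    pastMeasurableSpace B u ≤ mΩ :=
  iSup_le fun r => (hB.measurable r).comap_le

lemma integrable_exp_increment [NeZero μ] (hB : HasBrownianIncrements B μ)
    (θ : ℝ) {u t : ℝ} (hu : 0 ≤ u) (hut : u < t) :
    Integrable (fun ω => exp (θ * (B t ω - B u ω) - θ ^ 2 * (t - u) / 2)) μ :=
  integrable_exp_mul_sub_of_map_eq_gaussianReal (hB.map_sub u t hu hut) _ _

lemma integral_exp_increment (hB : HasBrownianIncrements B μ) (θ : ℝ) {u t : ℝ} (hu : 0 ≤ u)
    (hut : u < t) : ∫ ω, exp (θ * (B t ω - B u ω) - θ ^ 2 * (t - u) / 2) ∂μ = 1 := by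
  have := integral_exp_mul_sub_of_map_eq_gaussianReal (hB.map_sub u t hu hut) θ
  rwa [coe_toNNReal _ (sub_nonneg.2 hut.le)] at this

lemma expProcess_ae_eq (hB : HasBrownianIncrements B μ) (θ t : ℝ) :
    expProcess B θ t =ᵐ[μ] fun ω => exp (θ * (B t ω - B 0 ω) - θ ^ 2 * (t - 0) / 2) := by
  filter_upwards [hB.ae_eq_zero] with ω h0
  simp [expProcess, h0]

lemma integrable_expProcess [NeZero μ] (hB : HasBrownianIncrements B μ) (θ : ℝ)
    {t : ℝ} (ht : 0 < t) : Integrable (expProcess B θ t) μ :=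
  (hB.integrable_exp_increment θ le_rfl ht).congr (hB.expProcess_ae_eq θ t).symm

lemma integral_expProcess (hB : HasBrownianIncrements B μ) (θ : ℝ) {t : ℝ} (ht : 0 < t) :
    ∫ ω, expProcess B θ t ω ∂μ = 1 := by
  rw [integral_congr_ae (hB.expProcess_ae_eq θ t), hB.integral_exp_increment θ le_rfl ht]

/-- The martingale property of `expProcess B θ`, tested on events of the past. -/
lemma setIntegral_expProcess_eq [NeZero μ] (hB : HasBrownianIncrements B μ)
    (θ : ℝ) {u t : ℝ} (hu : 0 < u) (hut : u ≤ t) {E : Set Ω}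
    (hE : MeasurableSet[pastMeasurableSpace B u] E) :
    ∫ ω in E, expProcess B θ t ω ∂μ = ∫ ω in E, expProcess B θ u ω ∂μ := by
  rcases hut.eq_or_lt with rfl | hut
  · rfl
  set D := fun ω => exp (θ * (B t ω - B u ω) - θ ^ 2 * (t - u) / 2)
  set F := E.indicator (expProcess B θ u)
  have hF : Measurable[pastMeasurableSpace B u] F :=
    (measurable_exp.comp (((measurable_pastMeasurableSpace hu.le le_rfl).const_mul θ).sub_const
      _)).indicator hE
  have hD : Measurable[MeasurableSpace.comap (fun ω => B t ω - B u ω) inferInstance] D :=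
    measurable_exp.comp (((comap_measurable _).const_mul θ).sub_const _)
  have hindep : IndepFun D F μ := (IndepFun_iff_Indep _ _ μ).2 <|
    indep_of_indep_of_le_left (indep_of_indep_of_le_right (hB.indep_sub u t hu.le hut)
      hF.comap_le) hD.comap_le
  have hEm : MeasurableSet E := hB.pastMeasurableSpace_le u E hE
  calc ∫ ω in E, expProcess B θ t ω ∂μ = ∫ ω, D ω * F ω ∂μ := by
        rw [← integral_indicator hEm]
        congr 1 with ω
        by_cases hω : ω ∈ E <;> simp [F, D, hω, expProcess_eq_mul θ u t ω, mul_comm]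
    _ = ∫ ω, F ω ∂μ := by
        rw [hindep.integral_fun_mul_eq_mul_integral
          (hB.integrable_exp_increment θ hu.le hut).aestronglyMeasurable
          (((hB.integrable_expProcess θ hu).indicator hEm).aestronglyMeasurable),
          hB.integral_exp_increment θ hu.le hut, one_mul]
    _ = ∫ ω in E, expProcess B θ u ω ∂μ := integral_indicator hEm

end HasBrownianIncrements

end BrownianIncrements

section FirstPassage

variable {Ω ι : Type*} {mΩ : MeasurableSpace Ω} {μ : Measure Ω} [IsFiniteMeasure μ] [LinearOrder ι]

/-- Splitting the union according to the first index `i` with `ω ∈ A i` reduces a maximal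
inequality to the events `E ⊆ A i` that are known at time `i`. -/
theorem mul_measureReal_biUnion_le_integral {𝓕 : ι → MeasurableSpace Ω} (h𝓕 : Monotone 𝓕)
    (h𝓕m : ∀ i, 𝓕 i ≤ mΩ) {F : Finset ι} {A : ι → Set Ω}
    (hA : ∀ i ∈ F, MeasurableSet[𝓕 i] (A i)) {f : Ω → ℝ} (hf : Integrable f μ)
    (hf0 : 0 ≤ᵐ[μ] f) {c : ℝ}
    (hc : ∀ i ∈ F, ∀ E, MeasurableSet[𝓕 i] E → E ⊆ A i → c * μ.real E ≤ ∫ ω in E, f ω ∂μ) :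
    c * μ.real (⋃ i ∈ F, A i) ≤ ∫ ω, f ω ∂μ := by
  classical
  set E : ι → Set Ω := fun i => A i \ ⋃ j ∈ F.filter (· < i), A j
  have hE : ∀ i ∈ F, MeasurableSet[𝓕 i] (E i) := fun i hi =>
    (hA i hi).diff (Finset.measurableSet_biUnion _ fun j hj =>
      h𝓕 (Finset.mem_filter.1 hj).2.le _ (hA j (Finset.mem_filter.1 hj).1))
  have hEm : ∀ i ∈ F, MeasurableSet (E i) := fun i hi => h𝓕m i _ (hE i hi)
  have hdisj : (F : Set ι).PairwiseDisjoint E := by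
    intro i hi j hj hij
    wlog hlt : i < j generalizing i j
    · exact (this hj hi hij.symm (hij.lt_or_gt.resolve_left hlt)).symm
    refine Set.disjoint_left.2 fun ω hωi hωj => hωj.2 ?_
    exact Set.mem_biUnion (Finset.mem_filter.2 ⟨hi, hlt⟩) hωi.1
  have hunion : ⋃ i ∈ F, A i = ⋃ i ∈ F, E i := by
    refine subset_antisymm (fun ω hω => ?_)
      (Set.biUnion_mono subset_rfl fun i _ => Set.sdiff_subset)
    obtain ⟨i, hi, hωi⟩ := Set.mem_iUnion₂.1 hω
    have hne : (F.filter (ω ∈ A ·)).Nonempty := ⟨i, Finset.mem_filter.2 ⟨hi, hωi⟩⟩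
    obtain ⟨hmin, hωmin⟩ := Finset.mem_filter.1 ((F.filter (ω ∈ A ·)).min'_mem hne)
    refine Set.mem_biUnion hmin ⟨hωmin, fun hω' => ?_⟩
    obtain ⟨j, hj, hωj⟩ := Set.mem_iUnion₂.1 hω'
    obtain ⟨hjF, hjlt⟩ := Finset.mem_filter.1 hj
    exact (Finset.min'_le _ j (Finset.mem_filter.2 ⟨hjF, hωj⟩)).not_gt hjlt
  calc c * μ.real (⋃ i ∈ F, A i) = ∑ i ∈ F, c * μ.real (E i) := by
        rw [hunion, measureReal_biUnion_finset hdisj hEm, Finset.mul_sum]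
    _ ≤ ∑ i ∈ F, ∫ ω in E i, f ω ∂μ :=
        Finset.sum_le_sum fun i hi => hc i hi _ (hE i hi) Set.sdiff_subset
    _ = ∫ ω in ⋃ i ∈ F, E i, f ω ∂μ :=
        (integral_biUnion_finset F hEm hdisj fun i _ => hf.integrableOn).symm
    _ ≤ ∫ ω, f ω ∂μ := setIntegral_le_integral hf hf0

end FirstPassage

namespace HasBrownianIncrements

variable {Ω : Type*} {mΩ : MeasurableSpace Ω} {μ : Measure Ω} [IsProbabilityMeasure μ]
  {B : ℝ → Ω → ℝ} {θ : ℝ}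

lemma measure_exists_mem_finset_le (hB : HasBrownianIncrements B μ) (hθ : 0 ≤ θ) (x : ℝ)
    {F : Finset ℝ} (hF : ∀ t ∈ F, 0 < t) :
    μ {ω | ∃ t ∈ F, θ * t / 2 + x ≤ B t ω} ≤ ENNReal.ofReal (exp (-(θ * x))) := by
  rcases F.eq_empty_or_nonempty with rfl | hne
  · simp
  have hT : 0 < F.max' hne := hF _ (F.max'_mem hne)
  have hset : {ω | ∃ t ∈ F, θ * t / 2 + x ≤ B t ω} = ⋃ t ∈ F, {ω | θ * t / 2 + x ≤ B t ω} := by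
    ext; simp
  set T := F.max' hne
  have hcross : ∀ t ∈ F, ∀ E, MeasurableSet[pastMeasurableSpace B t] E →
      E ⊆ {ω | θ * t / 2 + x ≤ B t ω} →
      exp (θ * x) * μ.real E ≤ ∫ ω in E, expProcess B θ T ω ∂μ := by
    intro t ht E hE hEA
    rw [hB.setIntegral_expProcess_eq θ (hF t ht) (F.le_max' t ht) hE]
    refine setIntegral_ge_of_const_le_real (hB.pastMeasurableSpace_le t _ hE) (measure_ne_top _ _)
      (fun ω hω => exp_le_exp.2 ?_) (hB.integrable_expProcess θ (hF t ht)).integrableOn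
    have : θ * t / 2 + x ≤ B t ω := hEA hω
    nlinarith
  have hmax := mul_measureReal_biUnion_le_integral (pastMeasurableSpace_mono B)
    hB.pastMeasurableSpace_le (fun t ht => measurableSet_le measurable_const
      (measurable_pastMeasurableSpace (hF t ht).le le_rfl))
    (hB.integrable_expProcess θ hT) (ae_of_all _ fun _ => (exp_pos _).le) hcross
  rw [hB.integral_expProcess θ hT, ← le_div_iff₀' (exp_pos _), one_div, ← exp_neg] at hmax
  rw [hset, ← ofReal_measureReal (measure_ne_top μ _)]
  exact ENNReal.ofReal_le_ofReal hmax

lemma measure_exists_pos_le (hB : HasBrownianIncrements B μ)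
    (hcont : ∀ᵐ ω ∂μ, Continuous fun t => B t ω) (hθ : 0 ≤ θ) (x : ℝ) :
    μ {ω | ∃ t, 0 < t ∧ θ * t / 2 + x ≤ B t ω} ≤ ENNReal.ofReal (exp (-(θ * x))) := by
  have hrat : ∀ y, μ {ω | ∃ q : ℚ, 0 < (q : ℝ) ∧ θ * q / 2 + y ≤ B q ω} ≤
      ENNReal.ofReal (exp (-(θ * y))) := by
    intro y
    set S : Finset {q : ℚ // 0 < (q : ℝ)} → Set Ω :=
      fun G => {ω | ∃ t ∈ G.image (fun q => (q.1 : ℝ)), θ * t / 2 + y ≤ B t ω}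
    have hdir : Directed (· ⊆ ·) S := fun G G' => ⟨G ∪ G', fun ω ⟨t, ht, h⟩ =>
      ⟨t, Finset.image_subset_image Finset.subset_union_left ht, h⟩, fun ω ⟨t, ht, h⟩ =>
      ⟨t, Finset.image_subset_image Finset.subset_union_right ht, h⟩⟩
    have hcover : {ω | ∃ q : ℚ, 0 < (q : ℝ) ∧ θ * q / 2 + y ≤ B q ω} ⊆ ⋃ G, S G :=
      fun ω ⟨q, hq, h⟩ => Set.mem_iUnion.2 ⟨{⟨q, hq⟩}, q, by simp, h⟩
    calc _ ≤ μ (⋃ G, S G) := measure_mono hcover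
      _ = ⨆ G, μ (S G) := hdir.measure_iUnion
      _ ≤ _ := iSup_le fun G => hB.measure_exists_mem_finset_le hθ y (by
        simp only [Finset.mem_image]
        rintro _ ⟨q, -, rfl⟩
        exact q.2)
  have hlt : ∀ y < x, μ {ω | ∃ t, 0 < t ∧ θ * t / 2 + x ≤ B t ω} ≤
      ENNReal.ofReal (exp (-(θ * y))) := by
    intro y hyx
    refine (measure_mono_ae ?_).trans (hrat y)
    filter_upwards [hcont] with ω hω ⟨t, ht, h⟩
    have hU : IsOpen (Set.Ioi 0 ∩ {r : ℝ | y < B r ω - θ * r / 2}) :=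
      isOpen_Ioi.inter (isOpen_lt continuous_const (by fun_prop))
    obtain ⟨q, hq0, hq⟩ :=
      Rat.denseRange_cast.exists_mem_open hU ⟨t, ht, show y < B t ω - θ * t / 2 by linarith⟩
    exact ⟨q, hq0, by linarith [show y < B q ω - θ * q / 2 from hq]⟩
  have hcont_bound : Tendsto (fun y => ENNReal.ofReal (exp (-(θ * y)))) (𝓝[<] x)
      (𝓝 (ENNReal.ofReal (exp (-(θ * x))))) := by
    refine ((ENNReal.continuous_ofReal.comp ?_).tendsto x).mono_left nhdsWithin_le_nhds
    fun_prop
  exact ge_of_tendsto hcont_bound (eventually_nhdsWithin_of_forall hlt)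

end HasBrownianIncrements

section Peeling

lemma chord_le_sqrt {a b τ : ℝ} (ha : 0 < a) (haτ : a ≤ τ) (hτb : τ ≤ a * b) :
    (τ + a * √b) / (√a * (1 + √b)) ≤ √τ := by
  have hα : √a ≤ √τ := sqrt_le_sqrt haτ
  have hβ : √τ ≤ √a * √b := by rw [← sqrt_mul ha.le]; exact sqrt_le_sqrt hτb
  rw [div_le_iff₀ (by positivity)]
  conv_lhs => rw [← sq_sqrt (ha.le.trans haτ), ← sq_sqrt ha.le]
  nlinarith [mul_nonneg (sub_nonneg.2 hα) (sub_nonneg.2 hβ)]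

/-- The chord of `τ ↦ C √(τ g)` over `[a, a b]`; the relation between `C` and `b` is exactly
what makes the product of its slope and intercept equal to `g`. -/
lemma exists_line_le_mul_sqrt {a b g C : ℝ} (ha : 0 < a) (hg : 0 ≤ g) (hC : 0 ≤ C)
    (hCb : 2 * C ^ 2 * √b = (1 + √b) ^ 2) :
    ∃ θ x : ℝ, 0 ≤ θ ∧ θ * x = g ∧
      ∀ τ, a ≤ τ → τ ≤ a * b → θ * τ / 2 + x ≤ C * √(τ * g) := by
  have hden : 0 < √a * (1 + √b) := by positivity
  refine ⟨2 * C * √g / (√a * (1 + √b)), C * √g * (a * √b) / (√a * (1 + √b)), by positivity,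
    ?_, fun τ haτ hτb => ?_⟩
  · field_simp
    linear_combination (a * g) * hCb + (2 * C ^ 2 * √b * a) * sq_sqrt hg -
      ((1 + √b) ^ 2 * g) * sq_sqrt ha.le
  · calc 2 * C * √g / (√a * (1 + √b)) * τ / 2 + C * √g * (a * √b) / (√a * (1 + √b))
        = C * √g * ((τ + a * √b) / (√a * (1 + √b))) := by ring
      _ ≤ C * √g * √τ := by gcongr; exact chord_le_sqrt ha haτ hτb
      _ = C * √(τ * g) := by rw [sqrt_mul (ha.le.trans haτ)]; ring

lemma two_mul_sq_mul_sqrt_eq {η : ℝ} (hη : 0 < η) :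
    2 * ((η ^ ((1 : ℝ) / 4) + η ^ (-(1 : ℝ) / 4)) / √2) ^ 2 * √η = (1 + √η) ^ 2 := by
  have hq : η ^ ((1 : ℝ) / 4) * η ^ ((1 : ℝ) / 4) = √η := by
    rw [← rpow_add hη, sqrt_eq_rpow]; norm_num
  have hinv : η ^ (-(1 : ℝ) / 4) = (η ^ ((1 : ℝ) / 4))⁻¹ := by
    rw [neg_div, rpow_neg hη.le]
  have hq0 : 0 < η ^ ((1 : ℝ) / 4) := rpow_pos_of_pos hη _
  rw [hinv, div_pow, sq_sqrt zero_le_two, ← hq]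
  field_simp
  ring

lemma hasSum_zetaReal {s : ℝ} (hs : 1 < s) :
    HasSum (fun k : ℕ => ((k : ℝ) + 1) ^ (-s)) (zetaReal s) := by
  have h := (summable_nat_add_iff 1).2 (summable_nat_rpow.2 (neg_lt_neg hs))
  exact (h.congr fun k => by push_cast; rfl).hasSum

lemma add_one_rpow_neg_le_zetaReal {s : ℝ} (hs : 1 < s) (k : ℕ) :
    ((k : ℝ) + 1) ^ (-s) ≤ zetaReal s :=
  (hasSum_zetaReal hs).summable.le_tsum k fun _ _ => by positivity

lemma zetaReal_pos {s : ℝ} (hs : 1 < s) : 0 < zetaReal s :=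
  lt_of_lt_of_le (by simp) (add_one_rpow_neg_le_zetaReal hs 0)

/-- The level used on the block `[η ^ k, η ^ (k + 1)]`: `exp (-lilLevel η s δ k)` is the share
of `δ` given to that block. -/
noncomputable def lilLevel (η s δ : ℝ) (k : ℕ) : ℝ :=
  s * log ((k + 1) * log η) + log (zetaReal s / (δ * log η ^ s))

variable {η s δ : ℝ}

lemma exp_neg_lilLevel (hη : 1 < η) (hs : 1 < s) (hδ : 0 < δ) (k : ℕ) :
    exp (-lilLevel η s δ k) = δ * ((k : ℝ) + 1) ^ (-s) / zetaReal s := by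
  have hlog : 0 < log η := log_pos hη
  have hζ := zetaReal_pos hs
  have hy : 0 < ((k : ℝ) + 1) * log η := by positivity
  have h1 : exp (-(s * log (((k : ℝ) + 1) * log η))) = (((k : ℝ) + 1) * log η) ^ (-s) := by
    rw [rpow_def_of_pos hy]; ring_nf
  have h2 : exp (-log (zetaReal s / (δ * log η ^ s))) = δ * log η ^ s / zetaReal s := by
    rw [exp_neg, exp_log (by positivity), inv_div]
  rw [lilLevel, neg_add, exp_add, h1, h2, mul_rpow (by positivity) hlog.le, rpow_neg hlog.le]
  have : 0 < log η ^ s := rpow_pos_of_pos hlog s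
  field_simp

lemma lilLevel_nonneg (hη : 1 < η) (hs : 1 < s) (hδ : 0 < δ) (hδ1 : δ ≤ 1) (k : ℕ) :
    0 ≤ lilLevel η s δ k := by
  have hterm : δ * ((k : ℝ) + 1) ^ (-s) ≤ zetaReal s :=
    (mul_le_of_le_one_left (by positivity) hδ1).trans (add_one_rpow_neg_le_zetaReal hs k)
  have : exp (-lilLevel η s δ k) ≤ 1 := by
    rw [exp_neg_lilLevel hη hs hδ, div_le_one (zetaReal_pos hs)]
    exact hterm
  linarith [exp_le_one_iff.1 this]

lemma lilLevel_le (hη : 1 < η) (hs : 0 ≤ s) {k : ℕ} {τ : ℝ} (hτ : η ^ (k + 1) ≤ η * τ) :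
    lilLevel η s δ k ≤ s * log (log (η * τ)) + log (zetaReal s / (δ * log η ^ s)) := by
  have hlog : 0 < log η := log_pos hη
  have hpow : ((k : ℝ) + 1) * log η ≤ log (η * τ) := by
    have := log_le_log (pow_pos (by linarith) _) hτ
    rwa [log_pow, Nat.cast_succ] at this
  unfold lilLevel
  gcongr

lemma exists_line_le_of_boundary_le {C : ℝ} (hη : 1 < η) (hs : 0 ≤ s) (hC : 0 ≤ C)
    {θ x : ℕ → ℝ} (hθ : ∀ k, 0 ≤ θ k)
    (hline : ∀ k τ, η ^ k ≤ τ → τ ≤ η ^ k * η → θ k * τ / 2 + x k ≤ C * √(τ * lilLevel η s δ k))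
    {t y : ℝ} (hy : C * √(max 1 t *
      (s * log (log (η * max 1 t)) + log (zetaReal s / (δ * log η ^ s)))) ≤ y) :
    ∃ k, θ k * t / 2 + x k ≤ y := by
  obtain ⟨k, hk, hk'⟩ := exists_nat_pow_near (le_max_left 1 t) hη
  refine ⟨k, ?_⟩
  calc θ k * t / 2 + x k ≤ θ k * max 1 t / 2 + x k := by gcongr; exacts [hθ k, le_max_right 1 t]
    _ ≤ C * √(max 1 t * lilLevel η s δ k) := hline k _ hk (by rw [← pow_succ]; exact hk'.le)
    _ ≤ _ := by
        gcongr
        refine lilLevel_le hη hs ?_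
        rw [pow_succ']
        exact mul_le_mul_of_nonneg_left hk (by linarith)
    _ ≤ y := hy

end Peeling

/-- Paper's Proposition 6, finite-time law of the iterated logarithm:
for a standard one-dimensional Brownian motion `B`, for every `η > 1`, `s > 1`,
`δ ∈ (0,1)`, the probability that there exists `t ∈ (0,∞)` with
`B_t ≥ ((η^{1/4}+η^{−1/4})/√2) · √((1∨t)·(s·log log(η(1∨t)) + log(ζ(s)/(δ·(log η)^s))))`
is at most `δ`. -/
theorem brownian_finite_time_LIL {Ω : Type*} [MeasurableSpace Ω] (μ : Measure Ω)
    [IsProbabilityMeasure μ] (B : ℝ → Ω → ℝ)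
    (hmeas : ∀ t, Measurable (B t))
    (hB0 : ∀ᵐ ω ∂μ, B 0 ω = 0)
    (hcont : ∀ᵐ ω ∂μ, Continuous fun t => B t ω)
    (hgauss : ∀ u t : ℝ, 0 ≤ u → u < t →
      Measure.map (fun ω => B t ω - B u ω) μ = gaussianReal 0 (Real.toNNReal (t - u)))
    (hindep : ∀ u t : ℝ, 0 ≤ u → u < t →
      Indep (MeasurableSpace.comap (fun ω => B t ω - B u ω) inferInstance)
        (⨆ r : {r : ℝ // 0 ≤ r ∧ r ≤ u}, MeasurableSpace.comap (B r) inferInstance) μ)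
    (η s δ : ℝ) (hη : 1 < η) (hs : 1 < s) (hδ : δ ∈ Set.Ioo (0 : ℝ) 1) :
    μ {ω | ∃ t : ℝ, 0 < t ∧
        B t ω ≥ (η ^ ((1 : ℝ)/4) + η ^ (-(1 : ℝ)/4)) / Real.sqrt 2 *
          Real.sqrt ((max 1 t) *
            (s * Real.log (Real.log (η * max 1 t)) +
              Real.log (zetaReal s / (δ * Real.log η ^ s))))} ≤ ENNReal.ofReal δ := by
  obtain ⟨hδ0, hδ1⟩ := hδ
  have hB : HasBrownianIncrements B μ := ⟨hmeas, hB0, hgauss, hindep⟩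
  have hC : 0 ≤ (η ^ ((1 : ℝ)/4) + η ^ (-(1 : ℝ)/4)) / √2 := by positivity
  choose θ x hθ hθx hline using fun k : ℕ =>
    exists_line_le_mul_sqrt (pow_pos (zero_lt_one.trans hη) k)
      (lilLevel_nonneg hη hs hδ0 hδ1.le k) hC (two_mul_sq_mul_sqrt_eq (zero_lt_one.trans hη))
  have hsum : HasSum (fun k : ℕ => δ * ((k : ℝ) + 1) ^ (-s) / zetaReal s) δ := by
    have := ((hasSum_zetaReal hs).mul_left δ).div_const (zetaReal s)
    rwa [mul_div_assoc, div_self (zetaReal_pos hs).ne', mul_one] at this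
  calc _ ≤ μ (⋃ k, {ω | ∃ t, 0 < t ∧ θ k * t / 2 + x k ≤ B t ω}) := by
        refine measure_mono fun ω ⟨t, ht, hBt⟩ => Set.mem_iUnion.2 ?_
        exact (exists_line_le_of_boundary_le hη (zero_le_one.trans hs.le) hC hθ hline hBt).imp
          fun k hk => ⟨t, ht, hk⟩
    _ ≤ ∑' k, μ {ω | ∃ t, 0 < t ∧ θ k * t / 2 + x k ≤ B t ω} := measure_iUnion_le _
    _ ≤ ∑' k : ℕ, ENNReal.ofReal (δ * ((k : ℝ) + 1) ^ (-s) / zetaReal s) :=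
        ENNReal.tsum_le_tsum fun k => by
          rw [← exp_neg_lilLevel hη hs hδ0, ← hθx]
          exact hB.measure_exists_pos_le hcont (hθ k) (x k)
    _ = ENNReal.ofReal δ := by
        rw [← ENNReal.ofReal_tsum_of_nonneg (fun k => div_nonneg (by positivity)
          (zetaReal_pos hs).le) hsum.summable, hsum.tsum_eq]
end

section
/- Let g : ℝ → ℝ be continuous with g(t) ≥ 0 for all t ≥ 0, define G(T) = ∫₀ᵀ g(t) dt, and let a > 0. Suppose that for every T ≥ 1 at least one of the following holds: G(T) ≥ a·T, or g(T) ≥ 2a·T. Then G(T) ≥ a·T for every T ≥ 2. -/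
/-!
Let `τ` be the last time in `[1, T]` with `G τ ≥ a τ`, or `τ = 1` if there is none. On `(τ, T]`
the alternative forces `g s ≥ 2 a s`, so `G T ≥ G τ + a (T² - τ²)`. This is at least `a T` both
when `G τ ≥ a τ` and when `τ = 1`, where `G 1 ≥ 0` and `T ≥ 2`.
-/

open intervalIntegral Set

theorem exists_last_mem_or_eq_left {P : Set ℝ} (hP : IsClosed P) {b c : ℝ} (hbc : b ≤ c) :
    ∃ τ ∈ Icc b c, (τ = b ∨ τ ∈ P) ∧ ∀ s ∈ Ioc τ c, s ∉ P := by
  set S := Icc b c ∩ ({b} ∪ P)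
  have hS : IsCompact S := isCompact_Icc.inter_right (isClosed_singleton.union hP)
  have hSne : S.Nonempty := ⟨b, ⟨le_rfl, hbc⟩, Or.inl rfl⟩
  obtain ⟨hτbc, hτ⟩ := hS.sSup_mem hSne
  refine ⟨sSup S, hτbc, hτ, fun s ⟨hτs, hsc⟩ hsP => hτs.not_ge ?_⟩
  exact le_csSup hS.bddAbove ⟨⟨hτbc.1.trans hτs.le, hsc⟩, Or.inr hsP⟩

theorem mul_sq_sub_sq_div_two_le_integral {g : ℝ → ℝ} {c τ T : ℝ}
    (hg : IntervalIntegrable g MeasureTheory.volume τ T) (hτT : τ ≤ T)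
    (hlow : ∀ s ∈ Ioc τ T, c * s ≤ g s) :
    c * ((T ^ 2 - τ ^ 2) / 2) ≤ ∫ s in τ..T, g s := by
  rw [← integral_id, ← integral_const_mul, integral_of_le hτT, integral_of_le hτT]
  exact MeasureTheory.setIntegral_mono_on
    ((continuous_const.mul continuous_id).intervalIntegrable τ T).1 hg.1 measurableSet_Ioc hlow

/-- deterministic persistence lemma capturing the stopping-time
argument in the proof of the paper's Lemma 3: let `g : ℝ → ℝ` be continuous and
nonnegative on `[0,∞)`, let `G(T) = ∫₀ᵀ g`, and let `a > 0`. If for every `T ≥ 1`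
either `G(T) ≥ a·T` or `g(T) ≥ 2a·T`, then `G(T) ≥ a·T` for every `T ≥ 2`. -/
theorem integral_persistence (g : ℝ → ℝ) (hg : Continuous g)
    (hg0 : ∀ t : ℝ, 0 ≤ t → 0 ≤ g t) (a : ℝ) (ha : 0 < a)
    (h : ∀ T : ℝ, 1 ≤ T → (∫ t in (0 : ℝ)..T, g t) ≥ a * T ∨ g T ≥ 2 * a * T) :
    ∀ T : ℝ, 2 ≤ T → (∫ t in (0 : ℝ)..T, g t) ≥ a * T := by
  intro T hT
  have hP : IsClosed {s : ℝ | a * s ≤ ∫ t in (0 : ℝ)..s, g t} :=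
    isClosed_le (continuous_const.mul continuous_id)
      (continuous_primitive (fun u v => hg.intervalIntegrable u v) 0)
  obtain ⟨τ, ⟨hτ1, hτT⟩, hτ, hafter⟩ := exists_last_mem_or_eq_left hP (by linarith : (1 : ℝ) ≤ T)
  have hgrowth : ∀ s ∈ Ioc τ T, 2 * a * s ≤ g s := fun s hs =>
    (h s (hτ1.trans hs.1.le)).resolve_left (hafter s hs)
  have hsplit := integral_add_adjacent_intervals
    (hg.intervalIntegrable (μ := MeasureTheory.volume) 0 τ) (hg.intervalIntegrable τ T)
  have hlate := mul_sq_sub_sq_div_two_le_integral (hg.intervalIntegrable τ T) hτT hgrowth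
  rcases hτ with rfl | hτP
  · have hearly : 0 ≤ ∫ t in (0 : ℝ)..1, g t :=
      integral_nonneg zero_le_one fun t ht => hg0 t ht.1
    nlinarith [mul_nonneg ha.le (by nlinarith : (0 : ℝ) ≤ T ^ 2 - T - 1)]
  · have hearly : a * τ ≤ ∫ t in (0 : ℝ)..τ, g t := hτP
    nlinarith [mul_nonneg ha.le (sub_nonneg.2 hτT)]
end

section
/- Let p ≥ 1, let P ∈ ℂ^{p×p} be invertible, and let A = P⁻¹ Λ P, where Λ ∈ ℂ^{p×p} is block diagonal with Jordan blocks Λ₁, …, Λ_k of sizes l₁, …, l_k and eigenvalues λ̄₁, …, λ̄_k (each Λ_i has λ̄_i on the main diagonal, 1 on the superdiagonal, and 0 elsewhere). Let l* = max_i l_i and λ₁ = max_i Re(λ̄_i). Then for every x ∈ ℂ^p and every real t ≥ 1: ‖exp(tA)·x‖₂ ≤ √p · ‖P⁻¹‖_∞ · ‖P‖_∞ · ‖x‖_∞ · e · t^{l*−1} · e^{λ₁ t}, where ‖·‖₂ is the Euclidean norm, ‖x‖_∞ = max_i |x_i|, and ‖M‖_∞ = max_i ∑_j |M_{ij}| is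 the ℓ∞→ℓ∞ operator norm. -/
/-- The Jordan block of size `l` with eigenvalue `λ`: `λ` on the main diagonal, `1` on
the first superdiagonal, and `0` elsewhere. -/
def jordanBlock (l : ℕ) (lam : ℂ) : Matrix (Fin l) (Fin l) ℂ :=
  Matrix.of fun i j => if (i : ℕ) = (j : ℕ) then lam
    else if (i : ℕ) + 1 = (j : ℕ) then 1 else 0

open Matrix Finset NormedSpace
open scoped Matrix.Norms.Operator

/-!
Since `exp (t • P⁻¹ Λ P) = P⁻¹ exp (t • Λ) P`, submultiplicativity of the `ℓ∞ → ℓ∞` operator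
norm reduces the claim to bounding `‖exp (t • Λ)‖∞`, and `‖v‖₂ ≤ √p ‖v‖∞` converts back to the
Euclidean norm. The matrix `exp (t • Λ)` is block diagonal with blocks
`exp (t • Λᵢ) = e^{t λ̄ᵢ} exp (t • N)`, where `N` is the nilpotent shift: `N ^ l = 0` and every row
of `N ^ m` has at most one entry `1`, so `‖exp (t • N)‖∞ ≤ ∑_{m < l} t^m / m! ≤ t^(l*-1) e`
for `t ≥ 1`.
-/

namespace Matrix

theorem linfty_opNorm_eq_iSup {m n α : Type*} [Fintype m] [Fintype n] [SeminormedAddCommGroup α]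
    (A : Matrix m n α) : ‖A‖ = ⨆ i, ∑ j, ‖A i j‖ := by
  rw [linfty_opNorm_def, sup_univ_eq_ciSup, NNReal.coe_iSup]
  simp only [NNReal.coe_sum, coe_nnnorm]

theorem sum_nnnorm_le_linfty_opNNNorm {m n α : Type*} [Fintype m] [Fintype n]
    [SeminormedAddCommGroup α] (A : Matrix m n α) (i : m) : ∑ j, ‖A i j‖₊ ≤ ‖A‖₊ := by
  rw [linfty_opNNNorm_def]
  exact le_sup (f := fun i => ∑ j, ‖A i j‖₊) (mem_univ i)

theorem linfty_opNorm_blockDiagonal'_le {m : Type*} {n : m → Type*} [Fintype m] [DecidableEq m]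
    [∀ i, Fintype (n i)] {α : Type*} [SeminormedAddCommGroup α]
    (M : ∀ i, Matrix (n i) (n i) α) {C : ℝ} (hC : 0 ≤ C) (h : ∀ i, ‖M i‖ ≤ C) :
    ‖blockDiagonal' M‖ ≤ C := by
  lift C to NNReal using hC
  change ‖blockDiagonal' M‖₊ ≤ C
  rw [linfty_opNNNorm_def]
  refine Finset.sup_le fun ⟨i, a⟩ _ => ?_
  have hrow : ∑ jb : (j : m) × n j, ‖blockDiagonal' M ⟨i, a⟩ jb‖₊ = ∑ b, ‖M i a b‖₊ := by
    rw [Fintype.sum_sigma, Fintype.sum_eq_single i fun j hj => ?_]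
    · simp only [blockDiagonal'_apply_eq]
    · simp [blockDiagonal'_apply_ne M _ _ (Ne.symm hj)]
  rw [hrow]
  exact (sum_nnnorm_le_linfty_opNNNorm (M i) a).trans (NNReal.coe_le_coe.mp (h i))

theorem exp_smul_conj' {𝕂 n : Type*} [RCLike 𝕂] [Fintype n] [DecidableEq n]
    (U M : Matrix n n 𝕂) (hU : IsUnit U.det) (c : 𝕂) :
    exp (c • (U⁻¹ * M * U)) = U⁻¹ * exp (c • M) * U := by
  rw [← Matrix.smul_mul, ← Matrix.mul_smul, exp_conj' _ _ ((isUnit_iff_isUnit_det U).mpr hU)]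

theorem exp_blockDiagonal'_eq {m : Type*} {n : m → Type*} [Fintype m] [DecidableEq m]
    [∀ i, Fintype (n i)] [∀ i, DecidableEq (n i)] (M : ∀ i, Matrix (n i) (n i) ℂ) :
    exp (blockDiagonal' M) = blockDiagonal' fun i => exp (M i) := by
  rw [exp_blockDiagonal']
  exact congrArg blockDiagonal' (Pi.exp_def M)

theorem exp_smul_one {n : Type*} [Fintype n] [DecidableEq n] (z : ℂ) :
    exp (z • (1 : Matrix n n ℂ)) = Complex.exp z • (1 : Matrix n n ℂ) := by
  simp only [← Algebra.algebraMap_eq_smul_one, Complex.exp_eq_exp_ℂ]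
  exact (algebraMap_exp_comm z).symm

end Matrix

theorem pi_norm_eq_iSup {ι E : Type*} [Fintype ι] [SeminormedAddCommGroup E] (x : ι → E) :
    ‖x‖ = ⨆ i, ‖x i‖ := by
  rw [Pi.norm_def, sup_univ_eq_ciSup, NNReal.coe_iSup]
  rfl

theorem sqrt_sum_norm_sq_le {ι E : Type*} [Fintype ι] [SeminormedAddCommGroup E] (x : ι → E) :
    √(∑ i, ‖x i‖ ^ 2) ≤ √(Fintype.card ι) * ‖x‖ := by
  rw [← Real.sqrt_sq (norm_nonneg x), ← Real.sqrt_mul (Nat.cast_nonneg _)]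
  refine Real.sqrt_le_sqrt ?_
  calc ∑ i, ‖x i‖ ^ 2 ≤ ∑ _i : ι, ‖x‖ ^ 2 := by gcongr with i; exact norm_le_pi_norm x i
    _ = Fintype.card ι * ‖x‖ ^ 2 := by simp

theorem sum_range_pow_div_factorial_le {t : ℝ} (ht : 1 ≤ t) {n N : ℕ} (hn : n ≤ N) :
    ∑ m ∈ range n, t ^ m / m.factorial ≤ t ^ (N - 1) * Real.exp 1 := by
  calc ∑ m ∈ range n, t ^ m / m.factorial
      ≤ ∑ m ∈ range n, t ^ (N - 1) * (1 ^ m / m.factorial) := by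
        refine sum_le_sum fun m hm => ?_
        rw [one_pow, mul_one_div]
        gcongr
        have := mem_range.mp hm
        omega
    _ ≤ t ^ (N - 1) * Real.exp 1 := by
        rw [← mul_sum]
        gcongr
        exact Real.sum_le_exp_of_nonneg zero_le_one n

theorem NormedSpace.exp_eq_sum_range_of_pow_eq_zero (𝕂 : Type*) {𝔸 : Type*} [Field 𝕂] [CharZero 𝕂]
    [Ring 𝔸] [Algebra 𝕂 𝔸] [TopologicalSpace 𝔸] [IsTopologicalRing 𝔸] [T2Space 𝔸]
    {a : 𝔸} {n : ℕ} (h : a ^ n = 0) :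
    exp a = ∑ m ∈ range n, (m.factorial⁻¹ : 𝕂) • a ^ m := by
  rw [exp_eq_tsum 𝕂]
  refine tsum_eq_sum fun m hm => ?_
  rw [pow_eq_zero_of_le (by simpa using hm) h, smul_zero]

theorem NormedSpace.norm_exp_le_sum_range_of_pow_eq_zero (𝕂 : Type*) {𝔸 : Type*} [RCLike 𝕂]
    [NormedRing 𝔸] [NormedAlgebra 𝕂 𝔸] {a : 𝔸} {n : ℕ} (h : a ^ n = 0) :
    ‖exp a‖ ≤ ∑ m ∈ range n, ‖a ^ m‖ / m.factorial := by
  rw [exp_eq_sum_range_of_pow_eq_zero 𝕂 h]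
  refine (norm_sum_le _ _).trans_eq (sum_congr rfl fun m _ => ?_)
  rw [norm_smul, norm_inv, RCLike.norm_natCast, inv_mul_eq_div]

namespace Matrix

def jordanShift (R : Type*) [Semiring R] (l : ℕ) : Matrix (Fin l) (Fin l) R :=
  of fun i j => if (i : ℕ) + 1 = j then 1 else 0

section Semiring

variable (R : Type*) [Semiring R] (l : ℕ)

theorem jordanShift_apply (i j : Fin l) :
    jordanShift R l i j = if (i : ℕ) + 1 = j then 1 else 0 :=
  rfl

theorem jordanShift_pow_apply (m : ℕ) (i j : Fin l) :
    (jordanShift R l ^ m) i j = if (i : ℕ) + m = j then 1 else 0 := by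
  induction m generalizing i with
  | zero => simp [one_apply, Fin.ext_iff]
  | succ m ih =>
    simp only [pow_succ', mul_apply, ih, jordanShift_apply, ite_mul, one_mul, zero_mul]
    split_ifs with h
    · rw [sum_eq_single ⟨i + 1, by omega⟩ (fun k _ hk => if_neg (by grind)) (by simp)]
      grind
    · exact sum_eq_zero fun k _ => by grind

theorem jordanShift_pow_self : jordanShift R l ^ l = 0 := by
  ext i j
  rw [jordanShift_pow_apply, if_neg (by omega), zero_apply]

end Semiring

theorem linfty_opNorm_jordanShift_pow_le_one (R : Type*) [NormedRing R] [NormOneClass R]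
    (l m : ℕ) : ‖jordanShift R l ^ m‖ ≤ 1 := by
  suffices ‖jordanShift R l ^ m‖₊ ≤ 1 from this
  rw [linfty_opNNNorm_def]
  refine Finset.sup_le fun i _ => ?_
  simp only [jordanShift_pow_apply, apply_ite, nnnorm_one, nnnorm_zero, sum_boole]
  exact_mod_cast card_le_one.mpr fun a ha b hb => Fin.ext (by simp at ha hb; omega)

theorem norm_exp_smul_jordanShift_le {𝕂 : Type*} [RCLike 𝕂] (l : ℕ) (c : 𝕂) :
    ‖exp (c • jordanShift 𝕂 l)‖ ≤ ∑ m ∈ range l, ‖c‖ ^ m / m.factorial := by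
  have hpow : (c • jordanShift 𝕂 l) ^ l = 0 := by rw [smul_pow, jordanShift_pow_self, smul_zero]
  refine (norm_exp_le_sum_range_of_pow_eq_zero 𝕂 hpow).trans (sum_le_sum fun m _ => ?_)
  rw [smul_pow, norm_smul, norm_pow]
  gcongr
  exact mul_le_of_le_one_right (by positivity) (linfty_opNorm_jordanShift_pow_le_one 𝕂 l m)

end Matrix

theorem jordanBlock_eq_smul_one_add_jordanShift (l : ℕ) (lam : ℂ) :
    jordanBlock l lam = lam • (1 : Matrix (Fin l) (Fin l) ℂ) + jordanShift ℂ l := by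
  ext i j
  simp only [jordanBlock, jordanShift_apply, Matrix.add_apply, Matrix.smul_apply, one_apply,
    of_apply, smul_eq_mul, Fin.ext_iff]
  split_ifs <;> grind

theorem exp_smul_jordanBlock (l : ℕ) (lam c : ℂ) :
    exp (c • jordanBlock l lam) = Complex.exp (c * lam) • exp (c • jordanShift ℂ l) := by
  rw [jordanBlock_eq_smul_one_add_jordanShift, smul_add, smul_smul,
    Matrix.exp_add_of_commute _ _ ((Commute.one_left _).smul_left _ |>.smul_right _),
    Matrix.exp_smul_one, smul_mul, one_mul]

theorem norm_exp_smul_jordanBlock_le (l : ℕ) (lam : ℂ) {t : ℝ} (ht : 0 ≤ t) :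
    ‖exp ((t : ℂ) • jordanBlock l lam)‖ ≤
      Real.exp (lam.re * t) * ∑ m ∈ range l, t ^ m / m.factorial := by
  rw [exp_smul_jordanBlock, norm_smul, Complex.norm_exp, Complex.re_ofReal_mul, mul_comm t]
  gcongr
  simpa [abs_of_nonneg ht] using norm_exp_smul_jordanShift_le l (t : ℂ)

theorem exp_jordan_decomposition_bound_general (k : ℕ) (hk : 0 < k)
    (l : Fin k → ℕ) (lam : Fin k → ℂ)
    (P : Matrix ((i : Fin k) × Fin (l i)) ((i : Fin k) × Fin (l i)) ℂ)
    (hP : IsUnit P.det)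
    (A : Matrix ((i : Fin k) × Fin (l i)) ((i : Fin k) × Fin (l i)) ℂ)
    (hA : A = P⁻¹ * Matrix.blockDiagonal' (fun i => jordanBlock (l i) (lam i)) * P)
    (lstar : ℕ) (hlstar : lstar = Finset.univ.sup l)
    (lam1 : ℝ)
    (hlam1 : lam1 = Finset.univ.sup' (Finset.univ_nonempty_iff.mpr ⟨⟨0, hk⟩⟩)
      (fun i => (lam i).re))
    (x : ((i : Fin k) × Fin (l i)) → ℂ) (t : ℝ) (ht : 1 ≤ t) :
    Real.sqrt (∑ j, ‖(NormedSpace.exp ((t : ℂ) • A)).mulVec x j‖ ^ 2) ≤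
      Real.sqrt (Fintype.card ((i : Fin k) × Fin (l i))) *
        (⨆ i, ∑ j, ‖P⁻¹ i j‖) * (⨆ i, ∑ j, ‖P i j‖) *
        (⨆ j, ‖x j‖) * Real.exp 1 * t ^ (lstar - 1) *
        Real.exp (lam1 * t) := by
  set J := fun i => jordanBlock (l i) (lam i)
  have hexp : exp ((t : ℂ) • A) = P⁻¹ * blockDiagonal' (fun i => exp ((t : ℂ) • J i)) * P := by
    rw [hA, exp_smul_conj' _ _ hP, ← blockDiagonal'_smul, exp_blockDiagonal'_eq]
    rfl
  have hblock : ‖blockDiagonal' (fun i => exp ((t : ℂ) • J i))‖ ≤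
      Real.exp (lam1 * t) * (t ^ (lstar - 1) * Real.exp 1) := by
    refine linfty_opNorm_blockDiagonal'_le _ (by positivity) fun i => ?_
    have hre : (lam i).re ≤ lam1 := hlam1 ▸ le_sup' (fun i => (lam i).re) (mem_univ i)
    have hli : l i ≤ lstar := hlstar ▸ le_sup (mem_univ i)
    refine (norm_exp_smul_jordanBlock_le _ _ (by linarith)).trans ?_
    gcongr
    exact sum_range_pow_div_factorial_le ht hli
  calc √(∑ j, ‖(exp ((t : ℂ) • A) *ᵥ x) j‖ ^ 2)
      ≤ √(Fintype.card ((i : Fin k) × Fin (l i))) * ‖exp ((t : ℂ) • A) *ᵥ x‖ :=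
        sqrt_sum_norm_sq_le _
    _ ≤ √(Fintype.card ((i : Fin k) × Fin (l i))) *
          (‖P⁻¹‖ * ‖blockDiagonal' (fun i => exp ((t : ℂ) • J i))‖ * ‖P‖ * ‖x‖) := by
        gcongr
        rw [hexp]
        refine (linfty_opNorm_mulVec _ _).trans ?_
        gcongr
        exact (linfty_opNorm_mul _ _).trans (by gcongr; exact linfty_opNorm_mul _ _)
    _ ≤ √(Fintype.card ((i : Fin k) × Fin (l i))) *
          (‖P⁻¹‖ * (Real.exp (lam1 * t) * (t ^ (lstar - 1) * Real.exp 1)) * ‖P‖ * ‖x‖) := by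
        gcongr
    _ = _ := by
        rw [linfty_opNorm_eq_iSup, linfty_opNorm_eq_iSup, pi_norm_eq_iSup]
        ring

/-- equation (32) in the proof of the paper's Lemma 2: let
`A = P⁻¹ Λ P` with `P` invertible and `Λ` block diagonal with Jordan blocks of sizes
`l₁, …, l_k` and eigenvalues `λ̄₁, …, λ̄_k`; put `l* = max_i l_i`,
`λ₁ = max_i Re(λ̄_i)` and `p = ∑ i, l_i`. Then for every `x ∈ ℂ^p` and real `t ≥ 1`,
`‖exp(tA)·x‖₂ ≤ √p · ‖P⁻¹‖_∞ · ‖P‖_∞ · ‖x‖_∞ · e · t^{l*−1} · e^{λ₁ t}`. -/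
theorem exp_jordan_decomposition_bound (k : ℕ) (hk : 0 < k)
    (l : Fin k → ℕ) (hl : ∀ i, 1 ≤ l i) (lam : Fin k → ℂ)
    (P : Matrix ((i : Fin k) × Fin (l i)) ((i : Fin k) × Fin (l i)) ℂ)
    (hP : IsUnit P.det)
    (A : Matrix ((i : Fin k) × Fin (l i)) ((i : Fin k) × Fin (l i)) ℂ)
    (hA : A = P⁻¹ * Matrix.blockDiagonal' (fun i => jordanBlock (l i) (lam i)) * P)
    (lstar : ℕ) (hlstar : lstar = Finset.univ.sup l)
    (lam1 : ℝ)
    (hlam1 : lam1 = Finset.univ.sup' (Finset.univ_nonempty_iff.mpr ⟨⟨0, hk⟩⟩)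
      (fun i => (lam i).re))
    (x : ((i : Fin k) × Fin (l i)) → ℂ) (t : ℝ) (ht : 1 ≤ t) :
    Real.sqrt (∑ j, ‖(NormedSpace.exp ((t : ℂ) • A)).mulVec x j‖ ^ 2) ≤
      Real.sqrt (Fintype.card ((i : Fin k) × Fin (l i))) *
        (⨆ i, ∑ j, ‖P⁻¹ i j‖) * (⨆ i, ∑ j, ‖P i j‖) *
        (⨆ j, ‖x j‖) * Real.exp 1 * t ^ (lstar - 1) *
        Real.exp (lam1 * t) :=
  exp_jordan_decomposition_bound_general k hk l lam P hP A hA lstar hlstar lam1 hlam1 x t ht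
end
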